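/- Let f : ℝ^D → ℝ be Lipschitz continuous with constant L > 0, let μ ∈ ℝ^D, σ > 0, and let ξ ~ N(μ, σ²I_D). Then E[(f(ξ) − f(μ))² ‖ξ − μ‖²] ≤ L² σ⁴ D(D + 2); equivalently, the two-point gradient estimator (f(ξ) − f(μ))(ξ − μ)/σ² has second moment E‖(f(ξ) − f(μ))(ξ − μ)/σ²‖² ≤ L² D(D + 2), a bound independent of σ. -/

import Mathlib

open MeasureTheory
open scoped RealInnerProductSpace

/-- The density of the Gaussian distribution `N(μ, σ²I_D)` on `ℝ^D`. -/
noncomputable def gaussDensity {D : ℕ} (μ : EuclideanSpace ℝ (Fin D)) (σ : ℝ)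
    (x : EuclideanSpace ℝ (Fin D)) : ℝ :=
  ((Real.sqrt (2 * Real.pi) * σ) ^ D)⁻¹ * Real.exp (-‖x - μ‖ ^ 2 / (2 * σ ^ 2))

open Filter Real Asymptotics

namespace Stmt12

variable {σ : ℝ}

lemma intg {b : ℝ} (hb : 0 < b) (n : ℕ) :
    Integrable (fun t : ℝ => t ^ n * Real.exp (-b * t ^ 2)) := by
  have h := integrable_rpow_mul_exp_neg_mul_sq hb
    (s := (n : ℝ)) (lt_of_lt_of_le neg_one_lt_zero (Nat.cast_nonneg n))
  simpa [Real.rpow_natCast] using h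

lemma hbσ (hσ : 0 < σ) : 0 < (2 * σ ^ 2)⁻¹ := by positivity

lemma J0 (hσ : 0 < σ) :
    ∫ t : ℝ, Real.exp (-(2 * σ ^ 2)⁻¹ * t ^ 2) = Real.sqrt (2 * Real.pi) * σ := by
  rw [integral_gaussian,
    show Real.pi / (2 * σ ^ 2)⁻¹ = (2 * Real.pi) * σ ^ 2 by field_simp,
    Real.sqrt_mul (by positivity), Real.sqrt_sq hσ.le]

lemma rec_step {b : ℝ} (hb : 0 < b) (n : ℕ) :
    (2 * b) * ∫ t : ℝ, t ^ (n + 2) * Real.exp (-b * t ^ 2)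
      = (n + 1) * ∫ t : ℝ, t ^ n * Real.exp (-b * t ^ 2) := by
  set g' : ℝ → ℝ := fun t => (n + 1 : ℝ) * (t ^ n * Real.exp (-b * t ^ 2))
      - (2 * b) * (t ^ (n + 2) * Real.exp (-b * t ^ 2)) with hg'
  have tend_top : ∀ m : ℕ,
      Tendsto (fun t : ℝ => t ^ m * Real.exp (-b * t ^ 2)) atTop (nhds 0) := by
    intro m
    have h := rpow_mul_exp_neg_mul_sq_isLittleO_exp_neg hb (m : ℝ)
    have h2 : Tendsto (fun x : ℝ => Real.exp (-(1/2) * x)) atTop (nhds 0) := by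
      have := Real.tendsto_exp_neg_atTop_nhds_zero.comp
        (Tendsto.const_mul_atTop (by norm_num : (0:ℝ) < 1/2) tendsto_id)
      simpa [Function.comp_def, neg_mul] using this
    have := h.trans_tendsto h2
    simpa [Real.rpow_natCast] using this
  have tend_bot : ∀ m : ℕ,
      Tendsto (fun t : ℝ => t ^ m * Real.exp (-b * t ^ 2)) atBot (nhds 0) := by
    intro m
    have h1 : Tendsto (fun t : ℝ => (-t) ^ m * Real.exp (-b * t ^ 2)) atTop (nhds 0) := by
      have he : (fun t : ℝ => (-t) ^ m * Real.exp (-b * t ^ 2))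
          = fun t : ℝ => (-1) ^ m * (t ^ m * Real.exp (-b * t ^ 2)) := by
        funext t; rw [neg_pow]; ring
      rw [he]
      simpa using (tend_top m).const_mul ((-1 : ℝ) ^ m)
    have := h1.comp tendsto_neg_atBot_atTop
    simpa [Function.comp_def, neg_neg, neg_sq] using this
  have hderiv : ∀ t : ℝ,
      HasDerivAt (fun t : ℝ => t ^ (n + 1) * Real.exp (-b * t ^ 2)) (g' t) t := by
    intro t
    have h1 : HasDerivAt (fun t : ℝ => t ^ (n + 1)) ((n + 1 : ℝ) * t ^ n) t := by
      simpa using hasDerivAt_pow (n + 1) t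
    have h0 : HasDerivAt (fun t : ℝ => -b * t ^ 2) (-b * (2 * t)) t := by
      simpa using (hasDerivAt_pow 2 t).const_mul (-b)
    have h3 : HasDerivAt (fun t : ℝ => t ^ (n + 1) * Real.exp (-b * t ^ 2)) _ t := h1.mul h0.exp
    convert h3 using 1
    simp only [hg']
    ring
  have hint : Integrable g' :=
    ((intg hb n).const_mul _).sub ((intg hb (n + 2)).const_mul _)
  have h0 : ∫ t, g' t = 0 := by
    have := integral_of_hasDerivAt_of_tendsto hderiv hint (tend_bot (n+1)) (tend_top (n+1))
    simpa using this
  rw [hg'] at h0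
  rw [integral_sub ((intg hb n).const_mul _) ((intg hb (n + 2)).const_mul _),
    MeasureTheory.integral_const_mul, MeasureTheory.integral_const_mul] at h0
  linarith

lemma two_b (hσ : 0 < σ) : (2 : ℝ) * (2 * σ ^ 2)⁻¹ = (σ ^ 2)⁻¹ := by
  field_simp

lemma J2 (hσ : 0 < σ) :
    ∫ t : ℝ, t ^ 2 * Real.exp (-(2 * σ ^ 2)⁻¹ * t ^ 2)
      = σ ^ 2 * (Real.sqrt (2 * Real.pi) * σ) := by
  have hne : (σ ^ 2 : ℝ) ≠ 0 := by positivity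
  have h := rec_step (hbσ hσ) 0
  simp only [pow_zero, one_mul, Nat.cast_zero, zero_add] at h
  rw [J0 hσ, two_b hσ] at h
  rw [← h, ← mul_assoc, mul_inv_cancel₀ hne, one_mul]

lemma J4 (hσ : 0 < σ) :
    ∫ t : ℝ, t ^ 4 * Real.exp (-(2 * σ ^ 2)⁻¹ * t ^ 2)
      = 3 * σ ^ 4 * (Real.sqrt (2 * Real.pi) * σ) := by
  have hne : (σ ^ 2 : ℝ) ≠ 0 := by positivity
  have h := rec_step (hbσ hσ) 2
  rw [two_b hσ, J2 hσ, show 2 + 2 = 4 from rfl,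
    show ((2:ℕ):ℝ) + 1 = 3 by norm_num] at h
  calc ∫ t : ℝ, t ^ 4 * Real.exp (-(2 * σ ^ 2)⁻¹ * t ^ 2)
      = σ ^ 2 * ((σ ^ 2)⁻¹ * ∫ t : ℝ, t ^ 4 * Real.exp (-(2 * σ ^ 2)⁻¹ * t ^ 2)) := by
        rw [← mul_assoc, mul_inv_cancel₀ hne, one_mul]
    _ = σ ^ 2 * (3 * (σ ^ 2 * (Real.sqrt (2 * Real.pi) * σ))) := by rw [h]
    _ = 3 * σ ^ 4 * (Real.sqrt (2 * Real.pi) * σ) := by ring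

/-- Normalized 1-D Gaussian density. -/
noncomputable def ψ (σ : ℝ) (t : ℝ) : ℝ :=
  (Real.sqrt (2 * Real.pi) * σ)⁻¹ * Real.exp (-(2 * σ ^ 2)⁻¹ * t ^ 2)

lemma hc (hσ : 0 < σ) : (0 : ℝ) < Real.sqrt (2 * Real.pi) * σ := by
  have : (0:ℝ) < 2 * Real.pi := by positivity
  positivity

lemma psi_pow_eq (e : ℕ) : (fun t : ℝ => ψ σ t * t ^ e)
    = fun t : ℝ => (Real.sqrt (2 * Real.pi) * σ)⁻¹ * (t ^ e * Real.exp (-(2 * σ ^ 2)⁻¹ * t ^ 2)) := by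
  funext t; simp only [ψ]; ring

lemma psi_int_pow (hσ : 0 < σ) (e : ℕ) :
    Integrable (fun t : ℝ => ψ σ t * t ^ e) := by
  rw [psi_pow_eq]
  exact (intg (hbσ hσ) e).const_mul _

lemma M_val (hσ : 0 < σ) (e : ℕ) :
    ∫ t : ℝ, ψ σ t * t ^ e
      = (Real.sqrt (2 * Real.pi) * σ)⁻¹ * ∫ t : ℝ, t ^ e * Real.exp (-(2 * σ ^ 2)⁻¹ * t ^ 2) := by
  rw [psi_pow_eq, MeasureTheory.integral_const_mul]

lemma M0 (hσ : 0 < σ) : ∫ t : ℝ, ψ σ t * t ^ 0 = 1 := by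
  have h := M_val hσ 0
  simp only [pow_zero, one_mul] at h ⊢
  rw [h, J0 hσ, inv_mul_cancel₀ (hc hσ).ne']

lemma M2 (hσ : 0 < σ) : ∫ t : ℝ, ψ σ t * t ^ 2 = σ ^ 2 := by
  rw [M_val hσ 2, J2 hσ]
  field_simp [(hc hσ).ne']

lemma M4 (hσ : 0 < σ) : ∫ t : ℝ, ψ σ t * t ^ 4 = 3 * σ ^ 4 := by
  rw [M_val hσ 4, J4 hσ]
  field_simp [(hc hσ).ne']

lemma M0' (hσ : 0 < σ) : ∫ t : ℝ, ψ σ t = 1 := by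
  simpa using M0 hσ

variable {D : ℕ}

lemma key (σ : ℝ) (y : Fin D → ℝ) :
    (∏ i, ψ σ (y i)) * (∑ i, (y i) ^ 2) ^ 2
      = ∑ j, ∑ k, ∏ i,
          (ψ σ (y i) * ((y i) ^ (if i = j then 2 else 0) * (y i) ^ (if i = k then 2 else 0))) := by
  have hj : ∀ m : Fin D, (∏ i, (y i) ^ (if i = m then 2 else 0)) = (y m) ^ 2 := by
    intro m
    rw [Finset.prod_eq_single m (fun i _ hi => by rw [if_neg hi, pow_zero])
      (fun h => absurd (Finset.mem_univ m) h), if_pos rfl]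
  rw [sq (∑ i, (y i) ^ 2), Finset.sum_mul_sum, Finset.mul_sum]
  refine Finset.sum_congr rfl fun j _ => ?_
  rw [Finset.mul_sum]
  refine Finset.sum_congr rfl fun k _ => ?_
  rw [Finset.prod_mul_distrib, Finset.prod_mul_distrib, hj j, hj k]

lemma prod_int (hσ : 0 < σ) (j k : Fin D) :
    Integrable (fun y : Fin D → ℝ => ∏ i,
      (ψ σ (y i) * ((y i) ^ (if i = j then 2 else 0) * (y i) ^ (if i = k then 2 else 0)))) := by
  refine Integrable.fintype_prod (𝕜 := ℝ)
    (f := fun i t => ψ σ t * (t ^ (if i = j then 2 else 0) * t ^ (if i = k then 2 else 0)))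
    fun i => ?_
  show Integrable (fun t : ℝ =>
    ψ σ t * (t ^ (if i = j then 2 else 0) * t ^ (if i = k then 2 else 0))) volume
  have he : (fun t : ℝ => ψ σ t * (t ^ (if i = j then 2 else 0) * t ^ (if i = k then 2 else 0)))
      = fun t : ℝ => ψ σ t * t ^ ((if i = j then 2 else 0) + (if i = k then 2 else 0)) := by
    funext t; rw [pow_add]
  rw [he]
  exact psi_int_pow hσ _

lemma prod_val (hσ : 0 < σ) (j k : Fin D) :
    (∏ i, ∫ t : ℝ, ψ σ t * (t ^ (if i = j then 2 else 0) * t ^ (if i = k then 2 else 0)))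
      = if j = k then 3 * σ ^ 4 else σ ^ 4 := by
  by_cases hjk : j = k
  · subst hjk
    rw [if_pos rfl]
    have hfac : ∀ i : Fin D,
        (∫ t : ℝ, ψ σ t * (t ^ (if i = j then 2 else 0) * t ^ (if i = j then 2 else 0)))
          = if i = j then 3 * σ ^ 4 else 1 := by
      intro i
      by_cases h : i = j
      · rw [if_pos h, if_pos h]
        have he : ∀ t : ℝ, ψ σ t * (t ^ 2 * t ^ 2) = ψ σ t * t ^ 4 := fun t => by ring
        simp_rw [he]
        exact M4 hσ
      · rw [if_neg h, if_neg h]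
        have he : ∀ t : ℝ, ψ σ t * (t ^ 0 * t ^ 0) = ψ σ t := fun t => by
          simp [pow_zero]
        simp_rw [he]
        exact M0' hσ
    rw [Finset.prod_congr rfl (fun i _ => hfac i),
      Finset.prod_eq_single j (fun i _ hi => if_neg hi) (fun h => absurd (Finset.mem_univ j) h),
      if_pos rfl]
  · rw [if_neg hjk]
    have hfac : ∀ i : Fin D,
        (∫ t : ℝ, ψ σ t * (t ^ (if i = j then 2 else 0) * t ^ (if i = k then 2 else 0)))
          = (if i = j then σ ^ 2 else 1) * (if i = k then σ ^ 2 else 1) := by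
      intro i
      by_cases h1 : i = j
      · have h2 : i ≠ k := by rw [h1]; exact hjk
        rw [if_pos h1, if_neg h2, if_pos h1, if_neg h2, mul_one]
        have he : ∀ t : ℝ, ψ σ t * (t ^ 2 * t ^ 0) = ψ σ t * t ^ 2 := fun t => by ring
        simp_rw [he]
        exact M2 hσ
      · by_cases h2 : i = k
        · rw [if_neg h1, if_pos h2, if_neg h1, if_pos h2, one_mul]
          have he : ∀ t : ℝ, ψ σ t * (t ^ 0 * t ^ 2) = ψ σ t * t ^ 2 := fun t => by ring
          simp_rw [he]
          exact M2 hσ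
        · rw [if_neg h1, if_neg h2, if_neg h1, if_neg h2, mul_one]
          have he : ∀ t : ℝ, ψ σ t * (t ^ 0 * t ^ 0) = ψ σ t := fun t => by
            simp [pow_zero]
          simp_rw [he]
          exact M0' hσ
    rw [Finset.prod_congr rfl (fun i _ => hfac i), Finset.prod_mul_distrib,
      Finset.prod_eq_single j (fun i _ hi => if_neg hi) (fun h => absurd (Finset.mem_univ j) h),
      Finset.prod_eq_single k (fun i _ hi => if_neg hi) (fun h => absurd (Finset.mem_univ k) h),
      if_pos rfl, if_pos rfl]
    ring

lemma pi_integrable (hσ : 0 < σ) (D : ℕ) :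
    Integrable (fun y : Fin D → ℝ => (∏ i, ψ σ (y i)) * (∑ i, (y i) ^ 2) ^ 2) := by
  have he : (fun y : Fin D → ℝ => (∏ i, ψ σ (y i)) * (∑ i, (y i) ^ 2) ^ 2)
      = fun y : Fin D → ℝ => ∑ j, ∑ k, ∏ i,
          (ψ σ (y i) * ((y i) ^ (if i = j then 2 else 0) * (y i) ^ (if i = k then 2 else 0))) := by
    funext y; exact key σ y
  rw [he]
  exact integrable_finset_sum _ fun j _ => integrable_finset_sum _ fun k _ => prod_int hσ j k

lemma pi_moment (hσ : 0 < σ) (D : ℕ) :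
    ∫ y : Fin D → ℝ, (∏ i, ψ σ (y i)) * (∑ i, (y i) ^ 2) ^ 2 = σ ^ 4 * D * (D + 2) := by
  simp_rw [key σ]
  rw [integral_finset_sum _ (fun j _ => integrable_finset_sum _ (fun k _ => prod_int hσ j k))]
  have hcol : ∀ j : Fin D,
      (∫ y : Fin D → ℝ, ∑ k, ∏ i,
        (ψ σ (y i) * ((y i) ^ (if i = j then 2 else 0) * (y i) ^ (if i = k then 2 else 0))))
      = ∑ k : Fin D, (if j = k then 3 * σ ^ 4 else σ ^ 4) := by
    intro j
    rw [integral_finset_sum _ (fun k _ => prod_int hσ j k)]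
    refine Finset.sum_congr rfl fun k _ => ?_
    refine Eq.trans ?_ (prod_val hσ j k)
    exact MeasureTheory.integral_fintype_prod_eq_prod
      (fun i t => ψ σ t * (t ^ (if i = j then 2 else 0) * t ^ (if i = k then 2 else 0)))
  rw [Finset.sum_congr rfl (fun j _ => hcol j)]
  have hrow : ∀ j : Fin D,
      (∑ k : Fin D, (if j = k then 3 * σ ^ 4 else σ ^ 4)) = σ ^ 4 * D + 2 * σ ^ 4 := by
    intro j
    have h1 : ∀ k : Fin D, (if j = k then 3 * σ ^ 4 else σ ^ 4)
        = σ ^ 4 + (if j = k then 2 * σ ^ 4 else 0) := by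
      intro k; by_cases h : j = k <;> simp [h] <;> ring
    rw [Finset.sum_congr rfl (fun k _ => h1 k), Finset.sum_add_distrib, Finset.sum_const,
      Finset.sum_ite_eq Finset.univ j (fun _ => 2 * σ ^ 4), if_pos (Finset.mem_univ j)]
    simp [Finset.card_univ]
    ring
  rw [Finset.sum_congr rfl (fun j _ => hrow j), Finset.sum_const]
  simp [Finset.card_univ]
  ring

lemma norm_sq_eucl {D : ℕ} (z : EuclideanSpace ℝ (Fin D)) : ‖z‖ ^ 2 = ∑ i, z i ^ 2 := by
  rw [EuclideanSpace.norm_eq, Real.sq_sqrt (by positivity)]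
  simp [sq_abs]

lemma bridge {D : ℕ} (hσ : 0 < σ) (z : EuclideanSpace ℝ (Fin D)) :
    gaussDensity 0 σ z * ‖z‖ ^ 4 = (∏ i, ψ σ (z i)) * (∑ i, z i ^ 2) ^ 2 := by
  have h2 : ‖z‖ ^ 2 = ∑ i, z i ^ 2 := norm_sq_eucl z
  have h4 : ‖z‖ ^ 4 = (∑ i, z i ^ 2) ^ 2 := by
    rw [show (4:ℕ) = 2 * 2 from rfl, pow_mul, h2]
  unfold gaussDensity ψ
  rw [sub_zero, h2, h4, Finset.prod_mul_distrib, Finset.prod_const, ← Real.exp_sum,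
    Finset.card_univ, Fintype.card_fin]
  congr 1
  congr 1
  · rw [inv_pow]
  · congr 1
    rw [← Finset.mul_sum]
    ring

lemma hstep1 {D : ℕ} (σ : ℝ) (μ : EuclideanSpace ℝ (Fin D)) :
    (fun x : EuclideanSpace ℝ (Fin D) => gaussDensity μ σ x * ‖x - μ‖ ^ 4)
      = fun x => gaussDensity 0 σ (x - μ) * ‖x - μ‖ ^ 4 := by
  funext x; unfold gaussDensity; rw [sub_zero]

lemma hcoord {D : ℕ} (hσ : 0 < σ) (μ : EuclideanSpace ℝ (Fin D)) (y : Fin D → ℝ) :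
    gaussDensity 0 σ (((MeasurableEquiv.toLp 2 (Fin D → ℝ)).symm).symm y - μ)
        * ‖((MeasurableEquiv.toLp 2 (Fin D → ℝ)).symm).symm y - μ‖ ^ 4
      = (∏ i, ψ σ (y i - μ i)) * (∑ i, (y i - μ i) ^ 2) ^ 2 := by
  rw [bridge hσ]
  have hz : ∀ i, (((MeasurableEquiv.toLp 2 (Fin D → ℝ)).symm).symm y - μ) i = y i - μ i := by
    intro i
    simp [MeasurableEquiv.coe_toLp, PiLp.sub_apply]
  simp_rw [hz]

lemma eucl_moment {D : ℕ} (hσ : 0 < σ) (μ : EuclideanSpace ℝ (Fin D)) :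
    ∫ x : EuclideanSpace ℝ (Fin D), gaussDensity μ σ x * ‖x - μ‖ ^ 4
      = σ ^ 4 * D * (D + 2) := by
  rw [hstep1 σ μ,
    ← ((EuclideanSpace.volume_preserving_symm_measurableEquiv_toLp (Fin D)).symm).integral_comp'
      (fun x => gaussDensity 0 σ (x - μ) * ‖x - μ‖ ^ 4)]
  simp_rw [hcoord hσ μ]
  calc ∫ y : Fin D → ℝ, (∏ i, ψ σ (y i - μ i)) * (∑ i, (y i - μ i) ^ 2) ^ 2
      = ∫ y : Fin D → ℝ, (fun w : Fin D → ℝ => (∏ i, ψ σ (w i)) * (∑ i, (w i) ^ 2) ^ 2)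
          (y - fun i => μ i) := rfl
    _ = ∫ w : Fin D → ℝ, (∏ i, ψ σ (w i)) * (∑ i, (w i) ^ 2) ^ 2 :=
        integral_sub_right_eq_self (μ := (volume : Measure (Fin D → ℝ)))
          (fun w : Fin D → ℝ => (∏ i, ψ σ (w i)) * (∑ i, (w i) ^ 2) ^ 2) (fun i => μ i)
    _ = σ ^ 4 * D * (D + 2) := pi_moment hσ D

lemma eucl_integrable {D : ℕ} (hσ : 0 < σ) (μ : EuclideanSpace ℝ (Fin D)) :
    Integrable (fun x : EuclideanSpace ℝ (Fin D) => gaussDensity μ σ x * ‖x - μ‖ ^ 4) := by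
  rw [hstep1 σ μ,
    ← MeasurePreserving.integrable_comp_emb
      ((EuclideanSpace.volume_preserving_symm_measurableEquiv_toLp (Fin D)).symm)
      (MeasurableEquiv.measurableEmbedding _)]
  have he : ((fun x : EuclideanSpace ℝ (Fin D) => gaussDensity 0 σ (x - μ) * ‖x - μ‖ ^ 4)
        ∘ ((MeasurableEquiv.toLp 2 (Fin D → ℝ)).symm).symm)
      = fun y : Fin D → ℝ => (fun w : Fin D → ℝ => (∏ i, ψ σ (w i)) * (∑ i, (w i) ^ 2) ^ 2)
          (y - fun i => μ i) := by
    funext y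
    exact hcoord hσ μ y
  rw [he]
  exact (pi_integrable hσ D).comp_sub_right _

end Stmt12

/-- second-moment bound for the two-point Gaussian gradient estimator of an
`L`-Lipschitz function: `E[(f(ξ)−f(μ))²‖ξ−μ‖²] ≤ L²σ⁴D(D+2)`, i.e. the estimator
`(f(ξ)−f(μ))(ξ−μ)/σ²` has second moment at most `L²D(D+2)`, independently of `σ`. -/
theorem stmt_12 (D : ℕ) (f : EuclideanSpace ℝ (Fin D) → ℝ)
    (L : ℝ) (hL : 0 < L)
    (hLip : ∀ x y : EuclideanSpace ℝ (Fin D), |f x - f y| ≤ L * ‖x - y‖)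
    (μ : EuclideanSpace ℝ (Fin D)) (σ : ℝ) (hσ : 0 < σ) :
    (∫ x, gaussDensity μ σ x * ((f x - f μ) ^ 2 * ‖x - μ‖ ^ 2)) ≤
      L ^ 2 * σ ^ 4 * D * (D + 2) ∧
    (∫ x, gaussDensity μ σ x * ‖(σ ^ 2)⁻¹ • ((f x - f μ) • (x - μ))‖ ^ 2) ≤
      L ^ 2 * D * (D + 2) := by
  have hσ2 : (0:ℝ) < σ ^ 2 := by positivity
  have hgd : ∀ x : EuclideanSpace ℝ (Fin D), 0 ≤ gaussDensity μ σ x := by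
    intro x
    unfold gaussDensity
    positivity
  have hpt : ∀ x : EuclideanSpace ℝ (Fin D),
      gaussDensity μ σ x * ((f x - f μ) ^ 2 * ‖x - μ‖ ^ 2)
        ≤ L ^ 2 * (gaussDensity μ σ x * ‖x - μ‖ ^ 4) := by
    intro x
    have h1 : (f x - f μ) ^ 2 ≤ L ^ 2 * ‖x - μ‖ ^ 2 := by
      calc (f x - f μ) ^ 2 = |f x - f μ| ^ 2 := (sq_abs _).symm
        _ ≤ (L * ‖x - μ‖) ^ 2 := pow_le_pow_left₀ (abs_nonneg _) (hLip x μ) 2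
        _ = L ^ 2 * ‖x - μ‖ ^ 2 := by ring
    calc gaussDensity μ σ x * ((f x - f μ) ^ 2 * ‖x - μ‖ ^ 2)
        ≤ gaussDensity μ σ x * ((L ^ 2 * ‖x - μ‖ ^ 2) * ‖x - μ‖ ^ 2) :=
          mul_le_mul_of_nonneg_left
            (mul_le_mul_of_nonneg_right h1 (by positivity)) (hgd x)
      _ = L ^ 2 * (gaussDensity μ σ x * ‖x - μ‖ ^ 4) := by ring
  have hint : Integrable
      (fun x : EuclideanSpace ℝ (Fin D) => L ^ 2 * (gaussDensity μ σ x * ‖x - μ‖ ^ 4)) :=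
    (Stmt12.eucl_integrable hσ μ).const_mul _
  have hnonneg : ∀ x : EuclideanSpace ℝ (Fin D),
      0 ≤ gaussDensity μ σ x * ((f x - f μ) ^ 2 * ‖x - μ‖ ^ 2) := fun x =>
    mul_nonneg (hgd x) (by positivity)
  have hmain : (∫ x, gaussDensity μ σ x * ((f x - f μ) ^ 2 * ‖x - μ‖ ^ 2)) ≤
      L ^ 2 * σ ^ 4 * D * (D + 2) := by
    calc (∫ x, gaussDensity μ σ x * ((f x - f μ) ^ 2 * ‖x - μ‖ ^ 2))
        ≤ ∫ x, L ^ 2 * (gaussDensity μ σ x * ‖x - μ‖ ^ 4) :=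
          integral_mono_of_nonneg (Filter.Eventually.of_forall hnonneg) hint
            (Filter.Eventually.of_forall hpt)
      _ = L ^ 2 * (σ ^ 4 * D * (D + 2)) := by
          rw [MeasureTheory.integral_const_mul, Stmt12.eucl_moment hσ μ]
      _ = L ^ 2 * σ ^ 4 * D * (D + 2) := by ring
  refine ⟨hmain, ?_⟩
  have hpt2 : ∀ x : EuclideanSpace ℝ (Fin D),
      gaussDensity μ σ x * ‖(σ ^ 2)⁻¹ • ((f x - f μ) • (x - μ))‖ ^ 2
        = ((σ ^ 2)⁻¹) ^ 2 * (gaussDensity μ σ x * ((f x - f μ) ^ 2 * ‖x - μ‖ ^ 2)) := by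
    intro x
    rw [norm_smul, norm_smul, Real.norm_eq_abs, Real.norm_eq_abs, mul_pow, mul_pow,
      sq_abs, sq_abs]
    ring
  simp_rw [hpt2]
  rw [MeasureTheory.integral_const_mul]
  calc ((σ ^ 2)⁻¹) ^ 2 * ∫ x, gaussDensity μ σ x * ((f x - f μ) ^ 2 * ‖x - μ‖ ^ 2)
      ≤ ((σ ^ 2)⁻¹) ^ 2 * (L ^ 2 * σ ^ 4 * D * (D + 2)) :=
        mul_le_mul_of_nonneg_left hmain (by positivity)
    _ = L ^ 2 * D * (D + 2) := by
        field_simp
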